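/- Suppose all jobs have the same cost, i.e., c_j = c for all j = 1,…,n. Then for every greedy run S_0 = ∅, S_1, …, S_m, the terminal set S_m is optimal: z(S_m) = max_{S ⊆ {1,…,n}} z(S). -/

import Mathlib

/-!
Telescoping `Z_j = Σ_{l ≥ j} (Z_l - Z_{l+1})` (with `Z_n = 0`) writes the expected reward as
`R(S) = Σ_l (Z_l - Z_{l+1}) (1 - ∏_{j ∈ S, j ≤ l} π_j)`, a combination with nonnegative weights
of the set functions `S ↦ 1 - ∏_{j ∈ S, j ≤ l} π_j`. Each of them, hence `R`, is submodular and
satisfies the exchange inequality `R(T ∪ {t}) + π_t R(S) ≤ R(S ∪ {t}) + π_t R(T)` whenever every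
element of `T` below `t` lies in `S`. With equal costs, if `V` maximizes `z` among sets of its
size and `|U| = |V| + 1`, this inequality for the least `t ∈ U \ V` gives `z(U) ≤ z(V ∪ {t})`;
so a greedy extension of `V` again maximizes `z` among sets of its size. Hence `S_i` is best
among sets of size `i`; continuing greedily past `S_m` keeps this property, and by submodularity
each further step gains at most what it would have gained at `S_m`, which is not positive.
-/

/-- Expected reward of a subset `S`, sequencing its jobs in increasing index order:
`R(S) = Σ_{j∈S} r_j ∏_{i∈S, i≤j} π_i`. -/
def Rexp {n : ℕ} (pr r : Fin n → ℝ) (S : Finset (Fin n)) : ℝ :=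
  ∑ j ∈ S, r j * ∏ i ∈ S.filter (fun i => i ≤ j), pr i

/-- Total cost of a subset `S`. -/
def cst {n : ℕ} (c : Fin n → ℝ) (S : Finset (Fin n)) : ℝ := ∑ j ∈ S, c j

/-- Expected net profit `z(S) = R(S) − c(S)`. -/
def netz {n : ℕ} (pr r c : Fin n → ℝ) (S : Finset (Fin n)) : ℝ :=
  Rexp pr r S - cst c S

open Finset

section

variable {n : ℕ}

noncomputable def zIndex (pr r : Fin n → ℝ) (j : Fin n) : ℝ := pr j * r j / (1 - pr j)

noncomputable def zIndexExt (pr r : Fin n → ℝ) (k : ℕ) : ℝ :=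
  if h : k < n then zIndex pr r ⟨k, h⟩ else 0

noncomputable def zGap (pr r : Fin n → ℝ) (l : ℕ) : ℝ :=
  zIndexExt pr r l - zIndexExt pr r (l + 1)

def prefixProd (pr : Fin n → ℝ) (l : ℕ) (S : Finset (Fin n)) : ℝ := ∏ j ∈ S with j.val ≤ l, pr j

lemma zIndex_nonneg {pr r : Fin n → ℝ} (hpr : ∀ j, 0 ≤ pr j ∧ pr j < 1) (hr : ∀ j, 0 ≤ r j)
    (j : Fin n) : 0 ≤ zIndex pr r j :=
  div_nonneg (mul_nonneg (hpr j).1 (hr j)) (sub_nonneg.2 (hpr j).2.le)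

lemma zGap_nonneg {pr r : Fin n → ℝ} (hZ : Antitone (zIndex pr r))
    (hZ0 : ∀ j, 0 ≤ zIndex pr r j) (l : ℕ) : 0 ≤ zGap pr r l := by
  rw [zGap, sub_nonneg, zIndexExt, zIndexExt]
  split_ifs
  · exact hZ (Fin.mk_le_mk.2 l.le_succ)
  · omega
  · exact hZ0 _
  · rfl

lemma sum_zGap_Ico (pr r : Fin n → ℝ) (j : Fin n) :
    ∑ l ∈ Ico j.val n, zGap pr r l = zIndex pr r j := by
  have hn : zIndexExt pr r n = 0 := dif_neg n.lt_irrefl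
  have hj : zIndexExt pr r j = zIndex pr r j := dif_pos j.isLt
  calc ∑ l ∈ Ico j.val n, zGap pr r l
      = -∑ l ∈ Ico j.val n, (zIndexExt pr r (l + 1) - zIndexExt pr r l) := by
        simp only [zGap, ← sum_neg_distrib, neg_sub]
    _ = zIndex pr r j := by rw [sum_Ico_sub _ j.isLt.le, hn, hj, zero_sub, neg_neg]

lemma one_sub_prefixProd (pr : Fin n → ℝ) (l : ℕ) (S : Finset (Fin n)) :
    1 - prefixProd pr l S =
      ∑ j ∈ S with j.val ≤ l, (1 - pr j) * ∏ i ∈ S with i < j, pr i := by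
  have h := prod_one_sub_ordered (S.filter (fun j : Fin n => j.val ≤ l)) (fun j => 1 - pr j)
  simp only [sub_sub_cancel] at h
  rw [prefixProd, h, sub_sub_cancel]
  refine sum_congr rfl fun j hj => ?_
  have hjl := (mem_filter.1 hj).2
  congr 2
  ext i
  simp only [mem_filter, and_congr_left_iff, and_iff_left_iff_imp]
  exact fun hij _ => (Fin.lt_def.1 hij).le.trans hjl

lemma Rexp_eq_sum_zGap {pr : Fin n → ℝ} (hpr : ∀ j, pr j ≠ 1) (r : Fin n → ℝ)
    (S : Finset (Fin n)) :
    Rexp pr r S = ∑ l ∈ range n, zGap pr r l * (1 - prefixProd pr l S) := by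
  simp_rw [one_sub_prefixProd, mul_sum]
  rw [sum_comm' (t' := S) (s' := fun j => Ico j.val n)]
  · refine sum_congr rfl fun j hj => ?_
    rw [← sum_mul, sum_zGap_Ico, zIndex]
    have hprod : ∏ i ∈ S with i ≤ j, pr i = pr j * ∏ i ∈ S with i < j, pr i := by
      rw [← prod_insert (by simp)]
      congr 1
      ext i
      simp only [mem_filter, mem_insert]
      grind
    have h1 : 1 - pr j ≠ 0 := sub_ne_zero.2 (hpr j).symm
    rw [hprod]
    field_simp
  · intro l j
    simp only [mem_filter, mem_range, mem_Ico]
    tauto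

lemma prefixProd_insert_of_le (pr : Fin n → ℝ) {l : ℕ} {t : Fin n} (htl : t.val ≤ l)
    {S : Finset (Fin n)} (ht : t ∉ S) :
    prefixProd pr l (insert t S) = pr t * prefixProd pr l S := by
  rw [prefixProd, prefixProd, filter_insert, if_pos htl, prod_insert (by simp [ht])]

lemma prefixProd_insert_of_lt (pr : Fin n → ℝ) {l : ℕ} {t : Fin n} (hlt : l < t.val)
    (S : Finset (Fin n)) : prefixProd pr l (insert t S) = prefixProd pr l S := by
  rw [prefixProd, prefixProd, filter_insert, if_neg hlt.not_ge]

lemma prefixProd_le_of_filter_subset {pr : Fin n → ℝ} (hpr : ∀ j, 0 ≤ pr j ∧ pr j ≤ 1)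
    {l : ℕ} {S T : Finset (Fin n)}
    (h : {j ∈ T | j.val ≤ l} ⊆ {j ∈ S | j.val ≤ l}) :
    prefixProd pr l S ≤ prefixProd pr l T :=
  prod_le_prod_of_subset_of_le_one h (fun j _ => (hpr j).1) (fun j _ _ => (hpr j).2)

lemma prefixProd_exchange {pr : Fin n → ℝ} (hpr : ∀ j, 0 ≤ pr j ∧ pr j ≤ 1)
    {S T : Finset (Fin n)} {t : Fin n} (htS : t ∉ S) (htT : t ∉ T)
    (hTS : ∀ j ∈ T, j < t → j ∈ S) (l : ℕ) :
    (1 - prefixProd pr l (insert t T)) + pr t * (1 - prefixProd pr l S) ≤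
      (1 - prefixProd pr l (insert t S)) + pr t * (1 - prefixProd pr l T) := by
  rcases le_or_gt t.val l with htl | hlt
  · rw [prefixProd_insert_of_le pr htl htT, prefixProd_insert_of_le pr htl htS]
    linarith
  · rw [prefixProd_insert_of_lt pr hlt, prefixProd_insert_of_lt pr hlt]
    have hST : prefixProd pr l S ≤ prefixProd pr l T :=
      prefixProd_le_of_filter_subset hpr fun j hj => by
        obtain ⟨hjT, hjl⟩ := mem_filter.1 hj
        exact mem_filter.2 ⟨hTS j hjT (Fin.lt_def.2 (by omega)), hjl⟩
    nlinarith [(hpr t).2]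

lemma prefixProd_sub_insert_le {pr : Fin n → ℝ} (hpr : ∀ j, 0 ≤ pr j ∧ pr j ≤ 1)
    {X Y : Finset (Fin n)} (hXY : X ⊆ Y) {j : Fin n} (hj : j ∉ Y) (l : ℕ) :
    prefixProd pr l Y - prefixProd pr l (insert j Y) ≤
      prefixProd pr l X - prefixProd pr l (insert j X) := by
  rcases le_or_gt j.val l with hjl | hlt
  · rw [prefixProd_insert_of_le pr hjl hj, prefixProd_insert_of_le pr hjl (fun h => hj (hXY h))]
    have hYX : prefixProd pr l Y ≤ prefixProd pr l X :=
      prefixProd_le_of_filter_subset hpr (filter_subset_filter _ hXY)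
    nlinarith [(hpr j).2]
  · rw [prefixProd_insert_of_lt pr hlt, prefixProd_insert_of_lt pr hlt, sub_self, sub_self]

lemma Rexp_exchange {pr r : Fin n → ℝ} (hpr : ∀ j, 0 ≤ pr j ∧ pr j < 1)
    (hr : ∀ j, 0 ≤ r j) (hZ : Antitone (zIndex pr r))
    {S T : Finset (Fin n)} {t : Fin n} (htS : t ∉ S) (htT : t ∉ T)
    (hTS : ∀ j ∈ T, j < t → j ∈ S) :
    Rexp pr r (insert t T) + pr t * Rexp pr r S ≤
      Rexp pr r (insert t S) + pr t * Rexp pr r T := by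
  have hne : ∀ j, pr j ≠ 1 := fun j => (hpr j).2.ne
  simp only [Rexp_eq_sum_zGap hne, mul_sum, ← sum_add_distrib]
  refine sum_le_sum fun l _ => ?_
  have := mul_le_mul_of_nonneg_left
    (prefixProd_exchange (fun j => ⟨(hpr j).1, (hpr j).2.le⟩) htS htT hTS l)
    (zGap_nonneg hZ (zIndex_nonneg hpr hr) l)
  linarith

lemma Rexp_insert_sub_le_of_subset {pr r : Fin n → ℝ} (hpr : ∀ j, 0 ≤ pr j ∧ pr j < 1)
    (hr : ∀ j, 0 ≤ r j) (hZ : Antitone (zIndex pr r))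
    {X Y : Finset (Fin n)} (hXY : X ⊆ Y) {j : Fin n} (hj : j ∉ Y) :
    Rexp pr r (insert j Y) - Rexp pr r Y ≤ Rexp pr r (insert j X) - Rexp pr r X := by
  have hne : ∀ j, pr j ≠ 1 := fun j => (hpr j).2.ne
  simp only [Rexp_eq_sum_zGap hne, ← sum_sub_distrib]
  refine sum_le_sum fun l _ => ?_
  have := mul_le_mul_of_nonneg_left
    (prefixProd_sub_insert_le (fun j => ⟨(hpr j).1, (hpr j).2.le⟩) hXY hj l)
    (zGap_nonneg hZ (zIndex_nonneg hpr hr) l)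
  linarith

section GreedyStep

variable {α : Type*}

def IsMaxOfCard (f : Finset α → ℝ) (V : Finset α) : Prop :=
  ∀ U : Finset α, U.card = V.card → f U ≤ f V

variable [DecidableEq α] {f : Finset α → ℝ} {A B : Finset α}

def IsGreedyStep (f : Finset α → ℝ) (A B : Finset α) : Prop :=
  ∃ k ∉ A, B = insert k A ∧ f A < f (insert k A) ∧
    ∀ j ∉ A, f (insert j A) ≤ f (insert k A)

lemma IsGreedyStep.lt (h : IsGreedyStep f A B) : f A < f B := by
  obtain ⟨k, -, rfl, hlt, -⟩ := h
  exact hlt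

lemma IsGreedyStep.card_eq (h : IsGreedyStep f A B) : B.card = A.card + 1 := by
  obtain ⟨k, hk, rfl, -⟩ := h
  exact card_insert_of_notMem hk

end GreedyStep

lemma netz_const (pr r : Fin n → ℝ) (c : ℝ) (S : Finset (Fin n)) :
    netz pr r (fun _ => c) S = Rexp pr r S - c * S.card := by
  rw [netz, cst, sum_const, nsmul_eq_mul, mul_comm]

section EqualCosts

variable {pr r : Fin n → ℝ} {c : ℝ}

lemma IsMaxOfCard.exists_le_insert (hpr : ∀ j, 0 ≤ pr j ∧ pr j < 1) (hr : ∀ j, 0 ≤ r j)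
    (hZ : Antitone (zIndex pr r)) {V U : Finset (Fin n)}
    (hV : IsMaxOfCard (netz pr r fun _ => c) V) (hU : U.card = V.card + 1) :
    ∃ t ∉ V, netz pr r (fun _ => c) U ≤ netz pr r (fun _ => c) (insert t V) := by
  have hne : (U \ V).Nonempty := by
    rw [sdiff_nonempty]
    intro h
    have := card_le_card h
    omega
  set t := (U \ V).min' hne
  obtain ⟨htU, htV⟩ := mem_sdiff.1 (min'_mem _ hne)
  have hbelow : ∀ j ∈ U.erase t, j < t → j ∈ V := fun j hj hjt => by
    by_contra hjV
    exact (min'_le _ j (mem_sdiff.2 ⟨mem_of_mem_erase hj, hjV⟩)).not_gt hjt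
  have hcard : (U.erase t).card = V.card := by
    rw [card_erase_of_mem htU]
    omega
  have hR : Rexp pr r (U.erase t) ≤ Rexp pr r V := by
    have := hV _ hcard
    rwa [netz_const, netz_const, hcard, sub_le_sub_iff_right] at this
  have hx := Rexp_exchange hpr hr hZ htV (notMem_erase t U) hbelow
  rw [insert_erase htU] at hx
  refine ⟨t, htV, ?_⟩
  rw [netz_const, netz_const, hU, card_insert_of_notMem htV]
  nlinarith [mul_le_mul_of_nonneg_left hR (hpr t).1]

lemma IsMaxOfCard.insert_of_forall_le (hpr : ∀ j, 0 ≤ pr j ∧ pr j < 1)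
    (hr : ∀ j, 0 ≤ r j) (hZ : Antitone (zIndex pr r)) {V : Finset (Fin n)}
    (hV : IsMaxOfCard (netz pr r fun _ => c) V) {k : Fin n} (hk : k ∉ V)
    (hmax : ∀ j ∉ V, netz pr r (fun _ => c) (insert j V) ≤ netz pr r (fun _ => c) (insert k V)) :
    IsMaxOfCard (netz pr r fun _ => c) (insert k V) := by
  intro U hU
  rw [card_insert_of_notMem hk] at hU
  obtain ⟨t, htV, hUt⟩ := hV.exists_le_insert hpr hr hZ hU
  exact hUt.trans (hmax t htV)

lemma IsGreedyStep.isMaxOfCard (hpr : ∀ j, 0 ≤ pr j ∧ pr j < 1)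
    (hr : ∀ j, 0 ≤ r j) (hZ : Antitone (zIndex pr r)) {A B : Finset (Fin n)}
    (h : IsGreedyStep (netz pr r fun _ => c) A B)
    (hA : IsMaxOfCard (netz pr r fun _ => c) A) : IsMaxOfCard (netz pr r fun _ => c) B := by
  obtain ⟨k, hk, rfl, -, hmax⟩ := h
  exact hA.insert_of_forall_le hpr hr hZ hk hmax

lemma IsMaxOfCard.exists_superset_of_forall_insert_le (hpr : ∀ j, 0 ≤ pr j ∧ pr j < 1)
    (hr : ∀ j, 0 ≤ r j) (hZ : Antitone (zIndex pr r)) {V : Finset (Fin n)}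
    (hV : IsMaxOfCard (netz pr r fun _ => c) V)
    (hstop : ∀ j ∉ V, netz pr r (fun _ => c) (insert j V) ≤ netz pr r (fun _ => c) V)
    {k : ℕ} (hVk : V.card ≤ k) (hkn : k ≤ n) :
    ∃ W, V ⊆ W ∧ W.card = k ∧ IsMaxOfCard (netz pr r fun _ => c) W ∧
      netz pr r (fun _ => c) W ≤ netz pr r (fun _ => c) V := by
  induction k, hVk using Nat.le_induction with
  | base => exact ⟨V, subset_rfl, rfl, hV, le_rfl⟩
  | succ k hVk ih =>
    obtain ⟨W, hVW, hWk, hW, hWV⟩ := ih (by omega)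
    have hne : (univ \ W).Nonempty := by
      rw [sdiff_nonempty]
      intro h
      have := card_le_card h
      simp only [card_univ, Fintype.card_fin] at this
      omega
    obtain ⟨j, hj, hjmax⟩ := exists_max_image (univ \ W)
      (fun j => netz pr r (fun _ => c) (insert j W)) hne
    have hjW : j ∉ W := (mem_sdiff.1 hj).2
    have hjV : j ∉ V := fun h => hjW (hVW h)
    refine ⟨insert j W, hVW.trans (subset_insert _ _), by rw [card_insert_of_notMem hjW, hWk],
      hW.insert_of_forall_le hpr hr hZ hjW fun t ht => hjmax t (mem_sdiff.2 ⟨mem_univ t, ht⟩), ?_⟩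
    have hgain := Rexp_insert_sub_le_of_subset hpr hr hZ hVW hjW
    have hVj := hstop j hjV
    simp only [netz_const, card_insert_of_notMem hjV, card_insert_of_notMem hjW, Nat.cast_add,
      Nat.cast_one] at hVj hWV ⊢
    linarith

lemma IsMaxOfCard.le_of_forall_insert_le (hpr : ∀ j, 0 ≤ pr j ∧ pr j < 1)
    (hr : ∀ j, 0 ≤ r j) (hZ : Antitone (zIndex pr r)) {V : Finset (Fin n)}
    (hV : IsMaxOfCard (netz pr r fun _ => c) V)
    (hstop : ∀ j ∉ V, netz pr r (fun _ => c) (insert j V) ≤ netz pr r (fun _ => c) V)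
    {U : Finset (Fin n)} (hVU : V.card ≤ U.card) :
    netz pr r (fun _ => c) U ≤ netz pr r (fun _ => c) V := by
  have hUn : U.card ≤ n := by simpa using card_le_univ U
  obtain ⟨W, -, hWU, hW, hWV⟩ := hV.exists_superset_of_forall_insert_le hpr hr hZ hstop hVU hUn
  exact (hW U hWU.symm).trans hWV

end EqualCosts

end

theorem greedy_optimal_equal_costs_general (n : ℕ) (pr r c : Fin n → ℝ)
    (hpr : ∀ j, 0 ≤ pr j ∧ pr j < 1) (hr : ∀ j, 0 ≤ r j)
    (hZ : ∀ i j : Fin n, i ≤ j →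
      pr j * r j / (1 - pr j) ≤ pr i * r i / (1 - pr i))
    (cconst : ℝ) (hcc : ∀ j, c j = cconst)
    (m : ℕ) (S : ℕ → Finset (Fin n))
    (h0 : S 0 = ∅)
    (hstep : ∀ i < m, ∃ k ∉ S i, S (i + 1) = insert k (S i) ∧
        netz pr r c (S i) < netz pr r c (insert k (S i)) ∧
        ∀ j ∉ S i, netz pr r c (insert j (S i)) ≤ netz pr r c (insert k (S i)))
    (hterm : ∀ j ∉ S m, netz pr r c (insert j (S m)) ≤ netz pr r c (S m)) :
    netz pr r c (S m) =
      (Finset.univ : Finset (Fin n)).powerset.sup' (Finset.powerset_nonempty _)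
        (netz pr r c) := by
  obtain rfl : c = fun _ => cconst := funext hcc
  set z := netz pr r fun _ => cconst
  have hrun : ∀ i ≤ m, (S i).card = i ∧ IsMaxOfCard z (S i) := by
    intro i hi
    induction i with
    | zero =>
      rw [h0]
      exact ⟨card_empty, fun U hU => by rw [card_eq_zero.1 hU]⟩
    | succ i ih =>
      obtain ⟨hcard, hmax⟩ := ih (by omega)
      have hgreedy : IsGreedyStep z (S i) (S (i + 1)) := hstep i hi
      exact ⟨by rw [hgreedy.card_eq, hcard], hgreedy.isMaxOfCard hpr hr hZ hmax⟩
  have hmono : ∀ i ≤ m, z (S i) ≤ z (S m) := fun i hi =>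
    Nat.decreasingInduction (motive := fun i _ => z (S i) ≤ z (S m))
      (fun k hk ih => (IsGreedyStep.lt (hstep k hk)).le.trans ih) le_rfl hi
  have hopt : ∀ U, z U ≤ z (S m) := by
    intro U
    rcases le_or_gt U.card m with h | h
    · obtain ⟨hcard, hmax⟩ := hrun U.card h
      exact (hmax U hcard.symm).trans (hmono _ h)
    · obtain ⟨hcard, hmax⟩ := hrun m le_rfl
      exact hmax.le_of_forall_insert_le hpr hr hZ hterm (by omega)
  exact le_antisymm (le_sup' _ (mem_powerset.2 (subset_univ _))) (sup'_le _ _ fun U _ => hopt U)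

/-- With identical costs (`c_j = c` for all `j`), every greedy run terminates in an
optimal set: `z(S_m) = max_{S ⊆ {1,…,n}} z(S)`. -/
theorem greedy_optimal_equal_costs (n : ℕ) (pr r c : Fin n → ℝ)
    (hpr : ∀ j, 0 ≤ pr j ∧ pr j < 1) (hr : ∀ j, 0 ≤ r j) (hc0 : ∀ j, 0 ≤ c j)
    (hZ : ∀ i j : Fin n, i ≤ j →
      pr j * r j / (1 - pr j) ≤ pr i * r i / (1 - pr i))
    (cconst : ℝ) (hcc : ∀ j, c j = cconst)
    (m : ℕ) (S : ℕ → Finset (Fin n))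
    (h0 : S 0 = ∅)
    (hstep : ∀ i < m, ∃ k ∉ S i, S (i + 1) = insert k (S i) ∧
        netz pr r c (S i) < netz pr r c (insert k (S i)) ∧
        ∀ j ∉ S i, netz pr r c (insert j (S i)) ≤ netz pr r c (insert k (S i)))
    (hterm : ∀ j ∉ S m, netz pr r c (insert j (S m)) ≤ netz pr r c (S m)) :
    netz pr r c (S m) =
      (Finset.univ : Finset (Fin n)).powerset.sup' (Finset.powerset_nonempty _)
        (netz pr r c) :=
  greedy_optimal_equal_costs_general n pr r c hpr hr hZ cconst hcc m S h0 hstep hterm
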